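/- Let Γ be a group acting by isometries on a metric space X, let x ∈ X, and suppose there exists R₀ > 0 such that: (H1) every γ ∈ Γ with d(γ·x, x) ≥ R₀ satisfies d(γ²·x, x) ≥ 1.9 · d(γ·x, x); and (H2) for every element γ ∈ Γ of infinite order and every R > 0 there exists N such that d(γⁿ·x, x) ≥ R for all n ≥ N. Let k ≥ 1 be an integer. If C_{k+1}(Γ) is finite, then for every α ∈ Γ and every β ∈ C_{k-1}(Γ), the commutator [α, β] has finite order. -/

import Mathlib

open scoped commutatorElement

/-!
Let `f γ = d(γ x, x)`, a group seminorm on `Γ`, and `g = [α, β]`. Since `g ∈ C_k`, it is central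
modulo `C_{k+1}`, so `g^(m²)` and `[α^m, β^m]` differ by an element of the finite group `C_{k+1}`;
hence `f (g^(m²)) ≤ C + 2m (f α + f β)` grows at most linearly in `m`. If `g` had infinite order,
(H2) would make `f (gⁿ)` eventually at least `R₀`, and then (H1) multiplies it by `1.9` at every
doubling of `n`. Along `n = (m 2ʲ)²` this is growth like `3.61ʲ`, against the bound `C + O(2ʲ)`.
-/

section Displacement

variable (Γ : Type*) {X : Type*} [Group Γ] [PseudoMetricSpace X] [MulAction Γ X]
  [IsIsometricSMul Γ X]

def displacementSeminorm (x : X) : GroupSeminorm Γ where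
  toFun γ := dist (γ • x) x
  map_one' := by simp
  mul_le' γ δ := calc
    dist ((γ * δ) • x) x ≤ dist ((γ * δ) • x) (γ • x) + dist (γ • x) x := dist_triangle _ _ _
    _ = dist (γ • x) x + dist (δ • x) x := by rw [mul_smul, dist_smul, add_comm]
  inv' γ := by rw [← dist_smul γ, smul_inv_smul, dist_comm]

@[simp]
theorem displacementSeminorm_apply (x : X) (γ : Γ) :
    displacementSeminorm Γ x γ = dist (γ • x) x :=
  rfl

end Displacement

section Commutator

variable {G : Type*} [Group G] {a b : G}

theorem commutatorElement_pow_right_of_commute (hb : Commute ⁅a, b⁆ b) (n : ℕ) :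
    ⁅a, b ^ n⁆ = ⁅a, b⁆ ^ n := by
  have hconj : a * b * a⁻¹ = ⁅a, b⁆ * b := by group
  rw [commutatorElement_def, ← conj_pow, hconj, hb.mul_pow, mul_inv_cancel_right]

theorem commutatorElement_pow_pow_of_commute (ha : Commute ⁅a, b⁆ a) (hb : Commute ⁅a, b⁆ b)
    (m n : ℕ) : ⁅a ^ m, b ^ n⁆ = ⁅a, b⁆ ^ (m * n) := by
  have hn : ⁅b ^ n, a⁆ = (⁅a, b⁆ ^ n)⁻¹ := by
    rw [← commutatorElement_inv, commutatorElement_pow_right_of_commute hb]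
  have hna : Commute ⁅b ^ n, a⁆ a := hn ▸ (ha.pow_left n).inv_left
  rw [← commutatorElement_inv, commutatorElement_pow_right_of_commute hna, hn, inv_pow, inv_inv,
    ← pow_mul, mul_comm]

theorem QuotientGroup.mk_commutatorElement_pow_pow {N : Subgroup G} [N.Normal]
    (hab : ⁅a, b⁆ ∈ Subgroup.upperCentralSeriesStep N) (m n : ℕ) :
    ((⁅a ^ m, b ^ n⁆ : G) : G ⧸ N) = (⁅a, b⁆ ^ (m * n) : G) := by
  rw [Subgroup.upperCentralSeriesStep_eq_comap_center, Subgroup.mem_comap,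
    Subgroup.mem_center_iff] at hab
  have hcomm (y : G) : Commute (QuotientGroup.mk' N ⁅a, b⁆) (QuotientGroup.mk' N y) :=
    (hab _).symm
  rw [map_commutatorElement] at hcomm
  have := commutatorElement_pow_pow_of_commute (hcomm a) (hcomm b) m n
  simp only [← map_pow, ← map_commutatorElement] at this
  exact this

theorem commutatorElement_mem_upperCentralSeriesStep_lowerCentralSeries (a : G) {b : G} {n : ℕ}
    (hb : b ∈ (⊤ : Subgroup G).lowerCentralSeries n) :
    ⁅a, b⁆ ∈ Subgroup.upperCentralSeriesStep ((⊤ : Subgroup G).lowerCentralSeries (n + 2)) := by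
  have hcs := Subgroup.lowerCentralSeries_isDescendingCentralSeries (G := G)
  rw [← commutatorElement_inv]
  exact fun y => hcs.2 _ _ (inv_mem (hcs.2 b n hb a)) y

end Commutator

section Seminorm

variable {F G : Type*} [Group G] [FunLike F G ℝ] [GroupSeminormClass F G ℝ] (f : F)

theorem map_pow_le_mul (a : G) (n : ℕ) : f (a ^ n) ≤ n * f a := by
  induction n with
  | zero => simp
  | succ n ih =>
    calc f (a ^ (n + 1)) ≤ f (a ^ n) + f a := pow_succ a n ▸ map_mul_le_add f _ _
      _ ≤ (n + 1 : ℕ) * f a := by push_cast; linarith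

theorem map_commutatorElement_le (a b : G) : f ⁅a, b⁆ ≤ 2 * f a + 2 * f b := by
  have h := map_mul_le_add f (a * b * a⁻¹) b⁻¹
  have h' := map_mul_le_add f (a * b) a⁻¹
  have h'' := map_mul_le_add f a b
  rw [map_inv_eq_map] at h h'
  rw [commutatorElement_def]
  linarith

theorem map_commutatorElement_pow_le {N : Subgroup G} [N.Normal] {C : ℝ}
    (hC : ∀ z ∈ N, f z ≤ C) {a b : G} (hab : ⁅a, b⁆ ∈ Subgroup.upperCentralSeriesStep N)
    (m n : ℕ) : f (⁅a, b⁆ ^ (m * n)) ≤ C + 2 * (m * f a + n * f b) := by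
  have hmod : ⁅a, b⁆ ^ (m * n) / ⁅a ^ m, b ^ n⁆ ∈ N :=
    QuotientGroup.eq_iff_div_mem.1 (QuotientGroup.mk_commutatorElement_pow_pow hab m n).symm
  calc f (⁅a, b⁆ ^ (m * n)) ≤ f ⁅a ^ m, b ^ n⁆ + f (⁅a, b⁆ ^ (m * n) / ⁅a ^ m, b ^ n⁆) :=
        le_map_add_map_div f _ _
    _ ≤ 2 * f (a ^ m) + 2 * f (b ^ n) + C :=
        add_le_add (map_commutatorElement_le f _ _) (hC _ hmod)
    _ ≤ C + 2 * (m * f a + n * f b) := by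
        linarith [map_pow_le_mul f a m, map_pow_le_mul f b n]

end Seminorm

section Growth

variable {u : ℕ → ℝ} {c : ℝ} {N : ℕ}

theorem pow_mul_le_apply_mul_two_pow (hc : 0 ≤ c) (hdouble : ∀ t ≥ N, c * u t ≤ u (t * 2))
    (j : ℕ) {t : ℕ} (ht : N ≤ t) : c ^ j * u t ≤ u (t * 2 ^ j) := by
  induction j with
  | zero => simp
  | succ j ih =>
    have htj : N ≤ t * 2 ^ j := ht.trans (Nat.le_mul_of_pos_right t (by positivity))
    calc c ^ (j + 1) * u t = c * (c ^ j * u t) := by ring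
      _ ≤ c * u (t * 2 ^ j) := mul_le_mul_of_nonneg_left ih hc
      _ ≤ u (t * 2 ^ j * 2) := hdouble _ htj
      _ = u (t * 2 ^ (j + 1)) := by rw [pow_succ, mul_assoc]

theorem not_forall_apply_mul_self_le (hc : 2 < c ^ 2) (hc₀ : 0 ≤ c) {R₀ : ℝ} (hR₀ : 0 < R₀)
    (hlow : ∀ t ≥ N, R₀ ≤ u t) (hdouble : ∀ t ≥ N, c * u t ≤ u (t * 2)) (C K : ℝ) :
    ¬ ∀ m : ℕ, u (m * m) ≤ C + K * m := by
  intro hsq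
  set n := N + 1
  have hn : N ≤ n * n := (Nat.le_succ N).trans (Nat.le_mul_self n)
  set E := |C| + |K| * n
  have hbound (j : ℕ) : R₀ * (c ^ 2 / 2) ^ j ≤ E := by
    have hlower : (c ^ 2) ^ j * R₀ ≤ u (n * 2 ^ j * (n * 2 ^ j)) := by
      calc (c ^ 2) ^ j * R₀ ≤ c ^ (2 * j) * u (n * n) := by
            rw [pow_mul]; exact mul_le_mul_of_nonneg_left (hlow _ hn) (by positivity)
        _ ≤ u (n * n * 2 ^ (2 * j)) := pow_mul_le_apply_mul_two_pow hc₀ hdouble _ hn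
        _ = u (n * 2 ^ j * (n * 2 ^ j)) := by ring_nf
    have hupper : C + K * ↑(n * 2 ^ j) ≤ E * 2 ^ j := by
      have h1 : (1 : ℝ) ≤ 2 ^ j := one_le_pow₀ (by norm_num)
      have hK : K * n ≤ |K| * n := mul_le_mul_of_nonneg_right (le_abs_self K) n.cast_nonneg
      push_cast
      nlinarith [le_abs_self C, abs_nonneg C]
    have h2 : (0 : ℝ) < 2 ^ j := by positivity
    rw [div_pow, mul_div_assoc', div_le_iff₀ h2]
    linarith [hsq (n * 2 ^ j)]
  obtain ⟨j, hj⟩ := pow_unbounded_of_one_lt (E / R₀) (by linarith : (1 : ℝ) < c ^ 2 / 2)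
  rw [div_lt_iff₀ hR₀] at hj
  linarith [hbound j]

end Growth

/-- Let `Γ` act by isometries on a metric space `X`, `x ∈ X`, and suppose there is `R₀ > 0`
such that (H1) every `γ` with `d(γx, x) ≥ R₀` satisfies `d(γ²x, x) ≥ 1.9 · d(γx, x)`, and
(H2) for every `γ` of infinite order and every `R > 0` there is `N` with `d(γⁿx, x) ≥ R`
for all `n ≥ N`.  Let `k ≥ 1`.  If `C_{k+1}(Γ)` is finite, then for all `α ∈ Γ` and
`β ∈ C_{k-1}(Γ)`, the commutator `[α, β]` has finite order. -/
theorem commutator_isOfFinOrder_of_finite_lcs {Γ X : Type*} [Group Γ] [MetricSpace X]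
    [MulAction Γ X] (hiso : ∀ γ : Γ, Isometry (fun y : X => γ • y)) (x : X)
    (R₀ : ℝ) (hR₀ : 0 < R₀)
    (H1 : ∀ γ : Γ, R₀ ≤ dist (γ • x) x → 1.9 * dist (γ • x) x ≤ dist ((γ ^ 2) • x) x)
    (H2 : ∀ γ : Γ, ¬ IsOfFinOrder γ → ∀ R : ℝ, 0 < R →
      ∃ N : ℕ, ∀ n ≥ N, R ≤ dist ((γ ^ n) • x) x)
    (k : ℕ) (hk : 1 ≤ k) (hfin : Finite (Subgroup.lowerCentralSeries (⊤ : Subgroup Γ) (k + 1)))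
    (α β : Γ) (hβ : β ∈ Subgroup.lowerCentralSeries (⊤ : Subgroup Γ) (k - 1)) :
    IsOfFinOrder ⁅α, β⁆ := by
  have : IsIsometricSMul Γ X := ⟨hiso⟩
  set f := displacementSeminorm Γ x
  have hcentral : ⁅α, β⁆ ∈
      Subgroup.upperCentralSeriesStep ((⊤ : Subgroup Γ).lowerCentralSeries (k + 1)) := by
    obtain ⟨j, rfl⟩ := Nat.exists_eq_add_of_le' hk
    exact commutatorElement_mem_upperCentralSeriesStep_lowerCentralSeries α hβ
  obtain ⟨C, hC⟩ := ((Set.toFinite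
    ((⊤ : Subgroup Γ).lowerCentralSeries (k + 1) : Set Γ)).image f).bddAbove
  by_contra hinf
  obtain ⟨N, hN⟩ := H2 _ hinf R₀ hR₀
  have hdouble (t : ℕ) (ht : t ≥ N) : 1.9 * f (⁅α, β⁆ ^ t) ≤ f (⁅α, β⁆ ^ (t * 2)) := by
    simpa only [f, displacementSeminorm_apply, pow_mul] using H1 _ (hN t ht)
  refine not_forall_apply_mul_self_le (u := fun n => f (⁅α, β⁆ ^ n)) (by norm_num) (by norm_num)
    hR₀ hN hdouble C (2 * (f α + f β)) fun m => ?_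
  linarith [map_commutatorElement_pow_le f (fun z hz => hC ⟨z, hz, rfl⟩) hcentral m m]
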